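/- arXiv:2311.09728 — 2 statements merged into one kernel-verified Lean document; each statement's English description precedes it below -/
import Mathlib

section
/- Harmonic decomposition: let m ∈ ℕ and let P ∈ Pol be homogeneous of degree m. Then there exists a unique family of polynomials H_0, H_1, …, H_{⌊m/2⌋} ∈ Pol such that each H_j is homogeneous of degree m − 2j, Δ H_j = 0 for every j, and P = Σ_{j=0}^{⌊m/2⌋} r^{2j} · H_j. -/
/-! The key identity is `Δ(r² f) = r² Δf + (4k + 12) f` for `f` homogeneous of degree `k`,
which follows from Leibniz's rule and Euler's formula. Iterating it,
`Δ(r^{2(j+1)} H) = 4(j+1)(d+j+3) r^{2j} H` for harmonic `H` of degree `d`, a nonzero multiple.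
Existence is by induction on `m`: decompose `ΔP`, lift each term `r^{2j} K_j` through `Δ` by
dividing by that constant, and take for `H_0` what is left of `P`, which is then harmonic.
Uniqueness: applying `Δ` to a vanishing sum `∑ r^{2j} G_j` removes `G_0` and rescales the other
terms, so by induction on the number of terms `G_1, G_2, …` vanish, and then so does `G_0`. -/

open MvPolynomial

/-- The six index pairs `(a,b)` with `a < b`: the variables `z^{ab}`. -/
abbrev Idx : Type := {p : Fin 4 × Fin 4 // p.1 < p.2}

/-- `Pol = ℂ[z^{12}, z^{13}, z^{14}, z^{23}, z^{24}, z^{34}]`. -/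
abbrev Pol : Type := MvPolynomial Idx ℂ

/-- The generic antisymmetric matrix of variables: `Z a b = z^{ab}`,
extended by `z^{ba} = -z^{ab}` and `z^{aa} = 0`. -/
noncomputable def Z (a b : Fin 4) : Pol :=
  if h : a < b then X ⟨(a, b), h⟩
  else if h' : b < a then -X ⟨(b, a), h'⟩
  else 0

/-- `eps a b c d` is the sign of `(a,b,c,d)` as a permutation of `(0,1,2,3)`,
and `0` if two indices coincide (via the Vandermonde product formula). -/
noncomputable def eps (a b c d : Fin 4) : ℂ :=
  ((((b.val : ℤ) - a.val) * ((c.val : ℤ) - a.val) * ((d.val : ℤ) - a.val) *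
      ((c.val : ℤ) - b.val) * ((d.val : ℤ) - b.val) * ((d.val : ℤ) - c.val) : ℤ) : ℂ) / 12

/-- The lowered variables `z_{ab} = (1/2) ∑_{c,d} ε_{abcd} z^{cd}`. -/
noncomputable def Zlow (a b : Fin 4) : Pol :=
  (1 / 2 : ℂ) • ∑ c, ∑ d, eps a b c d • Z c d

/-- The partial derivative `∂_{ab}` with respect to `z^{ab}` (for `a < b`),
extended by `∂_{ba} = -∂_{ab}` and `∂_{aa} = 0`. -/
noncomputable def D (a b : Fin 4) : Pol →ₗ[ℂ] Pol :=
  if h : a < b then (pderiv ⟨(a, b), h⟩).toLinearMap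
  else if h' : b < a then -(pderiv ⟨(b, a), h'⟩).toLinearMap
  else 0

/-- The raised derivative `∂^{ab} = (1/2) ∑_{c,d} ε^{abcd} ∂_{cd}`. -/
noncomputable def Dup (a b : Fin 4) : Pol →ₗ[ℂ] Pol :=
  (1 / 2 : ℂ) • ∑ c, ∑ d, eps a b c d • D c d

/-- The Laplacian `Δ = 2(∂₁₂∂₃₄ − ∂₁₃∂₂₄ + ∂₁₄∂₂₃)`. -/
noncomputable def Lap : Pol →ₗ[ℂ] Pol :=
  (2 : ℂ) • (D 0 1 ∘ₗ D 2 3 - D 0 2 ∘ₗ D 1 3 + D 0 3 ∘ₗ D 1 2)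

/-- The squared radius `r² = 2(z¹²z³⁴ − z¹³z²⁴ + z¹⁴z²³)`. -/
noncomputable def r2 : Pol :=
  (2 : ℂ) • (Z 0 1 * Z 2 3 - Z 0 2 * Z 1 3 + Z 0 3 * Z 1 2)

namespace MvPolynomial

variable {σ R : Type*} [CommSemiring R]

theorem pderiv_pderiv_eq_zero_of_isHomogeneous {φ : MvPolynomial σ R} {n : ℕ}
    (hφ : φ.IsHomogeneous n) (hn : n ≤ 1) (i j : σ) : pderiv i (pderiv j φ) = 0 := by
  have h : (pderiv j φ).IsHomogeneous 0 := by simpa [Nat.sub_eq_zero_of_le hn] using hφ.pderiv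
  rw [← totalDegree_zero_iff_isHomogeneous, totalDegree_eq_zero_iff_eq_C] at h
  rw [h, pderiv_C]

theorem IsHomogeneous.smul {φ : MvPolynomial σ R} {n : ℕ} (hφ : φ.IsHomogeneous n) (r : R) :
    (r • φ).IsHomogeneous n := by
  rw [smul_eq_C_mul]
  exact hφ.C_mul r

end MvPolynomial

open Finset

-- `iab` indexes `z^{ab}`; `Fin 4` counts from `0`.
def i12 : Idx := ⟨(0, 1), by decide⟩
def i13 : Idx := ⟨(0, 2), by decide⟩
def i14 : Idx := ⟨(0, 3), by decide⟩
def i23 : Idx := ⟨(1, 2), by decide⟩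
def i24 : Idx := ⟨(1, 3), by decide⟩
def i34 : Idx := ⟨(2, 3), by decide⟩

theorem univ_idx_eq : (univ : Finset Idx) = {i12, i13, i14, i23, i24, i34} := by decide

theorem Z_of_lt {a b : Fin 4} (h : a < b) : Z a b = X ⟨(a, b), h⟩ := dif_pos h

theorem D_of_lt {a b : Fin 4} (h : a < b) : D a b = (pderiv ⟨(a, b), h⟩).toLinearMap := dif_pos h

theorem lap_apply (f : Pol) :
    Lap f = 2 * (pderiv i12 (pderiv i34 f) - pderiv i13 (pderiv i24 f)
      + pderiv i14 (pderiv i23 f)) := by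
  simp (disch := decide) only [Lap, D_of_lt, LinearMap.smul_apply, LinearMap.add_apply,
    LinearMap.sub_apply, LinearMap.comp_apply, smul_eq_C_mul, map_ofNat]
  rfl

theorem r2_eq : r2 = 2 * (X i12 * X i34 - X i13 * X i24 + X i14 * X i23) := by
  simp (disch := decide) only [r2, Z_of_lt, smul_eq_C_mul, map_ofNat]
  rfl

theorem isHomogeneous_r2 : r2.IsHomogeneous 2 := by
  rw [r2_eq, ← map_ofNat C]
  exact (((isHomogeneous_X _ _).mul (isHomogeneous_X _ _)).sub
    ((isHomogeneous_X _ _).mul (isHomogeneous_X _ _))).add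
    ((isHomogeneous_X _ _).mul (isHomogeneous_X _ _)) |>.C_mul 2

theorem isHomogeneous_lap {f : Pol} {n : ℕ} (hf : f.IsHomogeneous n) :
    (Lap f).IsHomogeneous (n - 2) := by
  have h : ∀ i j : Idx, (pderiv i (pderiv j f)).IsHomogeneous (n - 2) := fun i j => by
    simpa [Nat.sub_sub] using hf.pderiv.pderiv (i := i)
  rw [lap_apply, ← map_ofNat C]
  exact (((h _ _).sub (h _ _)).add (h _ _)).C_mul 2

theorem lap_eq_zero_of_isHomogeneous {f : Pol} {n : ℕ} (hf : f.IsHomogeneous n) (hn : n ≤ 1) :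
    Lap f = 0 := by
  simp [lap_apply, pderiv_pderiv_eq_zero_of_isHomogeneous hf hn]

theorem lap_r2_mul {f : Pol} {k : ℕ} (hf : f.IsHomogeneous k) :
    Lap (r2 * f) = r2 * Lap f + (4 * k + 12) * f := by
  have euler := hf.sum_X_mul_pderiv
  simp (disch := decide) only [univ_idx_eq, sum_insert, sum_singleton] at euler
  have pderiv_two (i : Idx) : pderiv i (2 : Pol) = 0 := by rw [← map_ofNat C, pderiv_C]
  simp +decide only [r2_eq, lap_apply, Derivation.leibniz, smul_eq_mul,
    map_add, map_sub, map_neg, pderiv_X, Pi.single_eq_same, ne_eq, Pi.single_eq_of_ne, pderiv_two,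
    mul_one, mul_zero, add_zero, sub_zero, zero_add, zero_sub]
  rw [nsmul_eq_mul] at euler
  linear_combination 4 * euler

theorem lap_r2_pow_succ_mul {H : Pol} {d : ℕ} (hH : H.IsHomogeneous d) (hH_lap : Lap H = 0)
    (j : ℕ) : Lap (r2 ^ (j + 1) * H) = ((4 * (j + 1) * (d + j + 3) : ℕ) : ℂ) • (r2 ^ j * H) := by
  induction j with
  | zero =>
    rw [pow_one, lap_r2_mul hH, hH_lap, pow_zero, one_mul, smul_eq_C_mul, map_natCast]
    push_cast
    ring
  | succ j ih =>
    have h : (r2 ^ (j + 1) * H).IsHomogeneous (2 * (j + 1) + d) :=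
      (isHomogeneous_r2.pow (j + 1)).mul hH
    rw [pow_succ', mul_assoc, lap_r2_mul h, ih, mul_smul_comm, smul_eq_C_mul, smul_eq_C_mul,
      map_natCast, map_natCast]
    push_cast
    ring

theorem exists_lap_r2_pow_succ_mul_eq {K : Pol} {d : ℕ} (hK : K.IsHomogeneous d)
    (hK_lap : Lap K = 0) (j : ℕ) :
    ∃ T : Pol, T.IsHomogeneous d ∧ Lap T = 0 ∧ Lap (r2 ^ (j + 1) * T) = r2 ^ j * K := by
  set c : ℂ := ((4 * (j + 1) * (d + j + 3) : ℕ) : ℂ)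
  have hc : c ≠ 0 := Nat.cast_ne_zero.mpr (by positivity)
  refine ⟨c⁻¹ • K, hK.smul _, by rw [map_smul, hK_lap, smul_zero], ?_⟩
  rw [mul_smul_comm, map_smul, lap_r2_pow_succ_mul hK hK_lap, smul_smul, inv_mul_cancel₀ hc,
    one_smul]

theorem exists_harmonic_decomposition (m : ℕ) (P : Pol) (hP : P.IsHomogeneous m) :
    ∃ H : ℕ → Pol, (∀ j, (H j).IsHomogeneous (m - 2 * j)) ∧ (∀ j, Lap (H j) = 0) ∧
      P = ∑ j ∈ range (m / 2 + 1), r2 ^ j * H j := by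
  induction m using Nat.strong_induction_on generalizing P with
  | _ m ih =>
  rcases Nat.lt_or_ge m 2 with hm | hm
  · refine ⟨Pi.single 0 P, fun j => ?_, fun j => ?_, by simp [Nat.div_eq_of_lt hm]⟩
    · rcases j with _ | j
      · simpa using hP
      · simpa using isHomogeneous_zero _ _ _
    · rcases j with _ | j
      · simpa using lap_eq_zero_of_isHomogeneous hP (by omega)
      · simp
  obtain ⟨K, hK, hK_lap, hK_sum⟩ := ih (m - 2) (by omega) (Lap P) (isHomogeneous_lap hP)
  choose T hT hT_lap hT_eq using fun j => exists_lap_r2_pow_succ_mul_eq (hK j) (hK_lap j) j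
  set S := ∑ j ∈ range ((m - 2) / 2 + 1), r2 ^ (j + 1) * T j
  have hS : S.IsHomogeneous m := IsHomogeneous.sum _ _ _ fun j hj => by
    have : 2 * (j + 1) + (m - 2 - 2 * j) = m := by have := mem_range.mp hj; omega
    exact this ▸ (isHomogeneous_r2.pow (j + 1)).mul (hT j)
  have hS_lap : Lap S = Lap P := by simp only [S, map_sum, hT_eq, hK_sum]
  refine ⟨fun | 0 => P - S | j + 1 => T j, fun j => ?_, fun j => ?_, ?_⟩
  · rcases j with _ | j
    · exact hP.sub hS
    · rw [show m - 2 * (j + 1) = m - 2 - 2 * j by omega]; exact hT j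
  · rcases j with _ | j
    · rw [map_sub, hS_lap, sub_self]
    · exact hT_lap j
  · rw [sum_range_succ', show m / 2 = (m - 2) / 2 + 1 by omega]
    simp [S]

theorem eq_zero_of_sum_r2_pow_mul_eq_zero {N : ℕ} {G : Fin N → Pol} {d : Fin N → ℕ}
    (hG : ∀ j, (G j).IsHomogeneous (d j)) (hG_lap : ∀ j, Lap (G j) = 0)
    (hsum : ∑ j : Fin N, r2 ^ (j : ℕ) * G j = 0) : G = 0 := by
  induction N with
  | zero => exact funext finZeroElim
  | succ N ih =>
    rw [Fin.sum_univ_succ] at hsum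
    have htail : ∀ j : Fin N, G j.succ = 0 := by
      have h := congrArg Lap hsum
      simp only [map_add, map_sum, hG_lap, Fin.val_succ, Fin.val_zero, pow_zero, one_mul,
        lap_r2_pow_succ_mul (hG _) (hG_lap _), ← mul_smul_comm, zero_add, map_zero] at h
      intro j
      have := congrFun (ih (fun j => (hG j.succ).smul _) (fun j => by simp [hG_lap]) h) j
      exact (smul_eq_zero.mp this).resolve_left (Nat.cast_ne_zero.mpr (by positivity))
    have h0 : G 0 = 0 := by simpa [htail] using hsum
    funext j
    exact Fin.cases h0 htail j

/-- Harmonic decomposition: every `m`-homogeneous polynomial `P ∈ Pol` is uniquely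
a sum `P = ∑_{j=0}^{⌊m/2⌋} r^{2j} H_j` with `H_j` harmonic and `(m-2j)`-homogeneous. -/
theorem harmonic_decomposition (m : ℕ) (P : Pol) (hP : P.IsHomogeneous m) :
    ∃! H : Fin (m / 2 + 1) → Pol,
      (∀ j, (H j).IsHomogeneous (m - 2 * (j : ℕ))) ∧
      (∀ j, Lap (H j) = 0) ∧
      P = ∑ j : Fin (m / 2 + 1), r2 ^ (j : ℕ) * H j := by
  refine existsUnique_of_exists_of_unique ?_ ?_
  · obtain ⟨H, hH, hH_lap, hH_sum⟩ := exists_harmonic_decomposition m P hP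
    refine ⟨fun j => H j, fun j => hH j, fun j => hH_lap j, ?_⟩
    rw [hH_sum, Fin.sum_univ_eq_sum_range (fun j => r2 ^ j * H j)]
  · rintro H H' ⟨hH, hH_lap, hH_sum⟩ ⟨hH', hH'_lap, hH'_sum⟩
    refine sub_eq_zero.mp (eq_zero_of_sum_r2_pow_mul_eq_zero (G := H - H')
      (fun j => (hH j).sub (hH' j)) (fun j => by simp [hH_lap, hH'_lap]) ?_)
    simp only [Pi.sub_apply, mul_sub, sum_sub_distrib, ← hH_sum, ← hH'_sum, sub_self]
end

section
/- Fix m ∈ ℕ and define the field F : {1,2,3,4}³ → Pol by F^{a}_{bc} = (z^{12})^m · z^{1a} · (1/2)(z_{4b} δ^1_c + z_{4c} δ^1_b), and the field f₁ by (f₁)^{a}_{bc} = (z^{12})^m · δ^1_b · δ^1_c · δ^a_4, where δ is the Kronecker delta. Then: (i) F is traceless, i.e. Σ_{b=1}^{4} F^{b}_{bc} = 0 for every c; and (ii) there exists κ ∈ ℂ such that the field F + κ · r² · f₁ is nonzero and harmonic, i.e. Δ(F^{a}_{bc} + κ · r² · (f₁)^{a}_{bc}) = 0 for all a, b, c. 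-/
open MvPolynomial

/-- The field `F^a_{bc} = (z^{12})^m z^{1a} ⬝ (1/2)(z_{4b} δ^1_c + z_{4c} δ^1_b)`. -/
noncomputable def Ffield (m : ℕ) : Fin 4 → Fin 4 → Fin 4 → Pol :=
  fun a b c => (Z 0 1) ^ m * Z 0 a *
    ((1 / 2 : ℂ) • (Zlow 3 b * (if c = 0 then 1 else 0) + Zlow 3 c * (if b = 0 then 1 else 0)))

/-- The field `(f₁)^a_{bc} = (z^{12})^m δ^1_b δ^1_c δ^a_4`. -/
noncomputable def f1 (m : ℕ) : Fin 4 → Fin 4 → Fin 4 → Pol :=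
  fun a b c => (Z 0 1) ^ m *
    ((if b = 0 then 1 else 0) * (if c = 0 then 1 else 0) * (if a = 3 then 1 else 0))


section Aux

abbrev v01 : Idx := ⟨(0,1), by decide⟩
abbrev v02 : Idx := ⟨(0,2), by decide⟩
abbrev v03 : Idx := ⟨(0,3), by decide⟩
abbrev v12 : Idx := ⟨(1,2), by decide⟩
abbrev v13 : Idx := ⟨(1,3), by decide⟩
abbrev v23 : Idx := ⟨(2,3), by decide⟩

lemma Zl30 : Zlow 3 0 = -X v12 := by
  simp [Zlow, Fin.sum_univ_four, eps, Z]
  norm_num [show ((3:Fin 4).val = 3) from rfl]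
  module

lemma Zl31 : Zlow 3 1 = X v02 := by
  simp [Zlow, Fin.sum_univ_four, eps, Z]
  norm_num [show ((3:Fin 4).val = 3) from rfl]
  module

lemma Zl32 : Zlow 3 2 = -X v01 := by
  simp [Zlow, Fin.sum_univ_four, eps, Z]
  norm_num [show ((3:Fin 4).val = 3) from rfl]
  module

lemma Zl33 : Zlow 3 3 = 0 := by
  simp [Zlow, Fin.sum_univ_four, eps, Z]

lemma Lap_apply (p : Pol) : Lap p =
    (2:ℂ) • (pderiv v01 (pderiv v23 p) - pderiv v02 (pderiv v13 p) + pderiv v03 (pderiv v12 p)) := by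
  simp [Lap, D]

lemma lap_r2_pow (m : ℕ) : Lap (r2 * (X v01)^m) = ((4*m+12 : ℕ):ℂ) • (X v01)^m := by
  simp [r2, Z, Lap_apply, pderiv_mul, pderiv_pow, pderiv_X, Pi.single_apply]
  cases m with
  | zero => simp [smul_smul]; module
  | succ n =>
    simp [smul_smul, MvPolynomial.smul_eq_C_mul, map_ofNat]
    ring

end Aux

set_option maxHeartbeats 2000000 in
/-- `F` is traceless, and for a suitable `κ ∈ ℂ` the field `F + κ r² f₁`
is nonzero and harmonic. -/
theorem Ffield_traceless_and_harmonic_corrector (m : ℕ) :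
    (∀ c, (∑ b, Ffield m b b c) = 0) ∧
    ∃ κ : ℂ, (∃ a b c, Ffield m a b c + κ • (r2 * f1 m a b c) ≠ 0) ∧
      ∀ a b c, Lap (Ffield m a b c + κ • (r2 * f1 m a b c)) = 0 := by
  constructor
  · intro c
    fin_cases c <;>
      simp [-smul_eq_zero, Ffield, Fin.sum_univ_four, Z, Zl30, Zl31, Zl32, Zl33] <;> ring
  · set κ : ℂ := ((2*m+6 : ℕ) : ℂ)⁻¹ with hκdef
    have hne : ((2*m+6 : ℕ) : ℂ) ≠ 0 := Nat.cast_ne_zero.mpr (by omega)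
    have hκ : κ * ((4*m+12 : ℕ):ℂ) = 2 := by
      rw [hκdef, inv_mul_eq_div, div_eq_iff hne]
      push_cast; ring
    have spec : Lap (Ffield m 3 0 0 + κ • (r2 * f1 m 3 0 0)) = 0 := by
      have h1 : Ffield m 3 0 0 = -((X v01)^m * X v03 * X v12) := by
        simp [-smul_eq_zero, Ffield, Z, Zl30, mul_add, mul_neg, mul_smul_comm, smul_smul]
        module
      have h2 : f1 m 3 0 0 = (X v01)^m := by simp [f1, Z]
      have h3 : Lap ((X v01)^m * X v03 * X v12) = (2:ℂ) • (X v01)^m := by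
        simp [Lap_apply, pderiv_mul, pderiv_pow, pderiv_X, Pi.single_apply]
      rw [h1, h2, map_add, map_neg, h3, map_smul, lap_r2_pow, smul_smul, hκ]
      module
    refine ⟨κ, ⟨1, 0, 0, ?_⟩, ?_⟩
    · have h0 : Ffield m 1 0 0 + κ • (r2 * f1 m 1 0 0) = -((X v01)^m * X v01 * X v12) := by
        simp [-smul_eq_zero, Ffield, f1, Z, Zl30, mul_add, mul_neg, mul_smul_comm, smul_smul]
        module
      rw [h0, neg_ne_zero]
      exact mul_ne_zero (mul_ne_zero (pow_ne_zero _ (X_ne_zero _)) (X_ne_zero _)) (X_ne_zero _)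
    · have hfin : ∀ x : Fin 4, x = 0 ∨ x = 1 ∨ x = 2 ∨ x = 3 := by decide
      intro a b c
      rcases hfin a with rfl|rfl|rfl|rfl <;> rcases hfin b with rfl|rfl|rfl|rfl <;>
          rcases hfin c with rfl|rfl|rfl|rfl
      case inr.inr.inr.inl.inl => exact spec
      all_goals
        simp [-smul_eq_zero, one_div, Ffield, f1, Z, Zl30, Zl31, Zl32, Zl33, Lap_apply,
          pderiv_mul, pderiv_pow, pderiv_X, pderiv_C, Pi.single_apply] <;> ring
end
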